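/- In the Chow–Robbins game, the point (8,2) belongs to the stopping set: if V_u(9,3) = 1/3 and V_u(9,1) = h(9,1) where h(t,x) = (1-α²)√(π/(2t))e^{x²/(2t)}(erf(x/√(2t))+1) is an upper bound for the value function at time 9, then (V_u(9,3) + V_u(9,1))/2 < 2/8, hence V^S(8,2) = 2/8 = g(8,2). -/

import Mathlib

open MeasureTheory Real

/-- The error function `erf z = (2/√π) ∫₀^z exp (-s²) ds`. -/
noncomputable def erf (z : ℝ) : ℝ :=
  (2 / Real.sqrt π) * ∫ s in (0 : ℝ)..z, Real.exp (-s ^ 2)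

/-!
With `ψ a = e^{a²/2} (1 + erf (a/√2))`, the equation defining `α` reads
`√(2π) (1 - α²) ψ(α) = 2α`, and eliminating `1 - α²` gives `h(9,1) = (α/3) ψ(1/3) / ψ(α)`.
Integrating the cubic Taylor polynomial of `e^{-s²/2}` with its error term bounds `erf` well
enough to get `ψ(1/3) ≤ 1.3334 < ψ(a) / (2a)` on `(0,1)`, hence `h(9,1) < 1/6`. Since `V^S ≤ V^W`,
the two successors of `(8,2)` are worth at most `3/9` and `1/6`, whose mean is below `2/8`,
so the dynamic programming principle stops at `(8,2)`.
-/

lemma abs_exp_neg_sub_taylor_le {u : ℝ} (h0 : 0 ≤ u) (h1 : u ≤ 1) :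
    |exp (-u) - (1 - u + u ^ 2 / 2 - u ^ 3 / 6)| ≤ 5 * u ^ 4 / 96 := by
  have h := Real.exp_bound (x := -u) (by rwa [abs_neg, abs_of_nonneg h0]) (n := 4) (by norm_num)
  norm_num [Finset.sum_range_succ, Nat.factorial, abs_of_nonneg h0] at h
  convert h using 2 <;> ring

lemma abs_integral_exp_neg_sq_div_two_sub_le {a : ℝ} (h0 : 0 ≤ a) (h2 : a ^ 2 ≤ 2) :
    |(∫ s in (0 : ℝ)..a, exp (-(s ^ 2 / 2))) - (a - a ^ 3 / 6 + a ^ 5 / 40 - a ^ 7 / 336)|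
      ≤ 5 * a ^ 9 / 13824 := by
  have hpoly : ∫ s in (0 : ℝ)..a, (1 - s ^ 2 / 2 + (s ^ 2 / 2) ^ 2 / 2 - (s ^ 2 / 2) ^ 3 / 6)
      = a - a ^ 3 / 6 + a ^ 5 / 40 - a ^ 7 / 336 := by
    simp only [div_pow, ← pow_mul]
    rw [intervalIntegral.integral_sub, intervalIntegral.integral_add,
      intervalIntegral.integral_sub] <;> try exact Continuous.intervalIntegrable (by fun_prop) _ _
    simp
    ring
  have herr : ∫ s in (0 : ℝ)..a, 5 * (s ^ 2 / 2) ^ 4 / 96 = 5 * a ^ 9 / 13824 := by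
    simp only [div_pow, ← pow_mul]
    simp
    ring
  rw [← hpoly, ← herr, ← intervalIntegral.integral_sub
    (Continuous.intervalIntegrable (by fun_prop) _ _)
    (Continuous.intervalIntegrable (by fun_prop) _ _), ← Real.norm_eq_abs]
  refine intervalIntegral.norm_integral_le_of_norm_le h0 (Filter.Eventually.of_forall
    fun s hs => abs_exp_neg_sub_taylor_le (by positivity) ?_)
    (Continuous.intervalIntegrable (by fun_prop) _ _)
  nlinarith [hs.1, hs.2]

lemma erf_div_sqrt_two (a : ℝ) :
    erf (a / √2) = √2 / √π * ∫ s in (0 : ℝ)..a, exp (-(s ^ 2 / 2)) := by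
  have h := intervalIntegral.integral_comp_div (fun s => exp (-s ^ 2)) (a := 0) (b := a)
    (show √2 ≠ 0 by positivity)
  simp only [div_pow, sq_sqrt (show (0 : ℝ) ≤ 2 by norm_num), zero_div, smul_eq_mul] at h
  rw [erf, h, ← mul_assoc, div_mul_eq_mul_div √2, mul_self_sqrt zero_le_two]

lemma abs_erf_div_sqrt_two_sub_le {a : ℝ} (h0 : 0 ≤ a) (h2 : a ^ 2 ≤ 2) :
    |erf (a / √2) - √2 / √π * (a - a ^ 3 / 6 + a ^ 5 / 40 - a ^ 7 / 336)|
      ≤ √2 / √π * (5 * a ^ 9 / 13824) := by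
  rw [erf_div_sqrt_two, ← mul_sub, abs_mul, abs_of_nonneg (by positivity)]
  exact mul_le_mul_of_nonneg_left (abs_integral_exp_neg_sq_div_two_sub_le h0 h2) (by positivity)

lemma sqrt_two_div_sqrt_pi_gt : 0.79788 < √2 / √π := by
  rw [← sqrt_div zero_le_two, lt_sqrt (by norm_num), lt_div_iff₀ pi_pos]
  nlinarith [pi_lt_d6]

lemma sqrt_two_div_sqrt_pi_lt : √2 / √π < 0.79789 := by
  rw [← sqrt_div zero_le_two, sqrt_lt' (by norm_num), div_lt_iff₀ pi_pos]
  nlinarith [pi_gt_d6]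

/-- `scaledErf a = erfcx (-a / √2)`; the bound `h` of the statement is
`h t x = (1 - α²) √(π / 2t) · scaledErf (x / √t)`. -/
noncomputable def scaledErf (a : ℝ) : ℝ := exp (a ^ 2 / 2) * (erf (a / √2) + 1)

lemma exp_mul_erf_add_one_eq_scaledErf (x : ℝ) {t : ℝ} (ht : 0 ≤ t) :
    exp (x ^ 2 / (2 * t)) * (erf (x / √(2 * t)) + 1) = scaledErf (x / √t) := by
  rw [scaledErf, div_pow, sq_sqrt ht, sqrt_mul zero_le_two, div_div, div_div, mul_comm 2 t,
    mul_comm √2]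

lemma exp_one_div_eighteen_le : exp (1 / 18) ≤ 55487 / 52488 := by
  refine (exp_bound' (by norm_num) (by norm_num) (n := 3) (by norm_num)).trans ?_
  norm_num [Finset.sum_range_succ, Nat.factorial]

lemma scaledErf_one_third_le : scaledErf (1 / 3) ≤ 1.3334 := by
  have herf := (abs_le.1 (abs_erf_div_sqrt_two_sub_le (a := 1 / 3) (by norm_num) (by norm_num))).2
  have hexp := exp_one_div_eighteen_le
  have hc := sqrt_two_div_sqrt_pi_lt
  rw [scaledErf]
  norm_num at herf ⊢
  nlinarith [exp_pos (1 / 18)]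

lemma lt_scaledErf {a : ℝ} (h0 : 0 < a) (h1 : a < 1) : 2.6668 * a < scaledErf a := by
  have hpoly : 2.6668 * a * (1 - a ^ 2 / 2 + a ^ 4 / 8 - a ^ 6 / 48 + 5 * a ^ 8 / 1536)
      < 1 + 0.79788 * (a - a ^ 3 / 6 + a ^ 5 / 40 - a ^ 7 / 336 - 5 * a ^ 9 / 13824) := by
    -- the margin is smallest (about 1.5%) near `a ≈ 0.84`, where `ψ(a)/a` is minimal
    nlinarith [sq_nonneg (a - 0.839), sq_nonneg (a ^ 2 - 0.7), sq_nonneg (a * (a - 0.839)),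
      sq_nonneg ((a - 0.839) * (a - 0.839)), pow_pos h0 3, pow_pos h0 5, sq_nonneg (a ^ 3 - 0.5),
      sq_nonneg (a ^ 4 - 0.5), mul_pos h0 (sub_pos.2 h1)]
  have hexp : exp (-(a ^ 2 / 2)) ≤ 1 - a ^ 2 / 2 + a ^ 4 / 8 - a ^ 6 / 48 + 5 * a ^ 8 / 1536 := by
    have := (abs_le.1 (abs_exp_neg_sub_taylor_le (u := a ^ 2 / 2) (by positivity)
      (by nlinarith))).2
    linarith
  have hpos : 0 ≤ a - a ^ 3 / 6 + a ^ 5 / 40 - a ^ 7 / 336 - 5 * a ^ 9 / 13824 := by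
    have : a ^ 9 ≤ a ^ 7 := pow_le_pow_of_le_one h0.le h1.le (by norm_num)
    have : a ^ 7 ≤ a ^ 5 := pow_le_pow_of_le_one h0.le h1.le (by norm_num)
    have : a ^ 3 ≤ a := pow_le_of_le_one h0.le h1.le (by norm_num)
    nlinarith [pow_pos h0 5]
  have herf : 0.79788 * (a - a ^ 3 / 6 + a ^ 5 / 40 - a ^ 7 / 336 - 5 * a ^ 9 / 13824)
      ≤ erf (a / √2) := by
    have := (abs_le.1 (abs_erf_div_sqrt_two_sub_le h0.le (by nlinarith))).1
    nlinarith [sqrt_two_div_sqrt_pi_gt]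
  have hlt : 2.6668 * a * exp (-(a ^ 2 / 2)) < erf (a / √2) + 1 := by nlinarith
  calc 2.6668 * a = 2.6668 * a * exp (-(a ^ 2 / 2)) * exp (a ^ 2 / 2) := by
        rw [mul_assoc _ (exp _), ← exp_add, neg_add_cancel, exp_zero, mul_one]
    _ < (erf (a / √2) + 1) * exp (a ^ 2 / 2) := by gcongr
    _ = scaledErf a := mul_comm _ _

theorem point_8_2_is_stopping_general (α : ℝ) (hα : α ∈ Set.Ioo (0 : ℝ) 1)
    (heq : Real.sqrt (2 * π) * (1 - α ^ 2) * Real.exp (α ^ 2 / 2)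
      * (erf (α / Real.sqrt 2) + 1) = 2 * α)
    (h : ℝ → ℝ → ℝ)
    (hh : ∀ t x, h t x = (1 - α ^ 2) * Real.sqrt (π / (2 * t))
      * Real.exp (x ^ 2 / (2 * t)) * (erf (x / Real.sqrt (2 * t)) + 1))
    (VW : ℝ → ℝ → ℝ)
    (hVW : ∀ t x, VW t x = if x ≤ α * Real.sqrt t then h t x else x / t)
    (VS : ℝ → ℝ → ℝ)
    (hDPP : ∀ (n : ℕ) (x : ℝ), 0 < n →
      VS n x = max (x / n) ((VS (n + 1) (x + 1) + VS (n + 1) (x - 1)) / 2))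
    (hub : ∀ t x : ℝ, 0 < t → VS t x ≤ VW t x) :
    ((1 : ℝ) / 3 + h 9 1) / 2 < 2 / 8 ∧ VS 8 2 = 2 / 8 := by
  obtain ⟨hα0, hα1⟩ := hα
  have hsqrt9 : √(9 : ℝ) = 3 := by
    rw [show (9 : ℝ) = 3 ^ 2 by norm_num, sqrt_sq (by norm_num)]
  have hsqrt2π : √(2 * π) = 6 * √(π / (2 * 9)) := by
    rw [show 2 * π = 6 ^ 2 * (π / (2 * 9)) by ring, sqrt_mul (by positivity), sqrt_sq (by norm_num)]
  have hroot : √(2 * π) * (1 - α ^ 2) * scaledErf α = 2 * α := by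
    rw [scaledErf, ← heq]; ring
  have h91_eq : 6 * h 9 1 * scaledErf α = 2 * α * scaledErf (1 / 3) := by
    rw [hh, mul_assoc _ (exp _), exp_mul_erf_add_one_eq_scaledErf 1 (by norm_num), hsqrt9,
      ← hroot, hsqrt2π]
    ring
  have h91 : h 9 1 < 1 / 6 := by
    nlinarith [lt_scaledErf hα0 hα1, scaledErf_one_third_le]
  have hVS93 : VS 9 3 ≤ 1 / 3 := by
    have := hub 9 3 (by norm_num)
    rw [hVW, hsqrt9, if_neg (by nlinarith)] at this
    linarith
  have hVS91 : VS 9 1 ≤ 1 / 6 := by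
    have := hub 9 1 (by norm_num)
    rw [hVW] at this
    split_ifs at this <;> linarith
  refine ⟨by linarith, ?_⟩
  have hdpp : VS 8 2 = max (2 / 8) ((VS 9 3 + VS 9 1) / 2) := by
    convert hDPP 8 2 (by norm_num) using 3 <;> norm_num
  rw [hdpp, max_eq_left (by linarith)]

/-- The point `(8,2)` belongs to the stopping set of the Chow–Robbins game: with
`h` the explicit upper-bound function, `VW` the Brownian value function, and `VS` the
value function of the Chow–Robbins game (satisfying the dynamic programming principle,
the gain lower bound and the upper bound `VS ≤ VW`), one-step backwards induction gives
`(VW(9,3) + h(9,1))/2 = (1/3 + h(9,1))/2 < 2/8`, hence `V^S(8,2) = 2/8 = g(8,2)`. -/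
theorem point_8_2_is_stopping (α : ℝ) (hα : α ∈ Set.Ioo (0 : ℝ) 1)
    (heq : Real.sqrt (2 * π) * (1 - α ^ 2) * Real.exp (α ^ 2 / 2)
      * (erf (α / Real.sqrt 2) + 1) = 2 * α)
    (h : ℝ → ℝ → ℝ)
    (hh : ∀ t x, h t x = (1 - α ^ 2) * Real.sqrt (π / (2 * t))
      * Real.exp (x ^ 2 / (2 * t)) * (erf (x / Real.sqrt (2 * t)) + 1))
    (VW : ℝ → ℝ → ℝ)
    (hVW : ∀ t x, VW t x = if x ≤ α * Real.sqrt t then h t x else x / t)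
    (VS : ℝ → ℝ → ℝ)
    (hDPP : ∀ (n : ℕ) (x : ℝ), 0 < n →
      VS n x = max (x / n) ((VS (n + 1) (x + 1) + VS (n + 1) (x - 1)) / 2))
    (hgain : ∀ t x : ℝ, 0 < t → x / t ≤ VS t x)
    (hub : ∀ t x : ℝ, 0 < t → VS t x ≤ VW t x) :
    ((1 : ℝ) / 3 + h 9 1) / 2 < 2 / 8 ∧ VS 8 2 = 2 / 8 :=
  point_8_2_is_stopping_general α hα heq h hh VW hVW VS hDPP hub
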